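/- arXiv:1712.05194 — 2 statements merged into one kernel-verified Lean document; each statement's English description precedes it below -/
import Mathlib

section
/- Let (P,θ) be a minimal flow on a compact metric space and let c : ℝ × P → (0,∞) be a continuous positive cocycle. If there exists p₀ ∈ P such that sup over t ∈ ℝ of |log c(t,p₀)| < ∞, then there exists a continuous function k : P → ℝ such that k(θ_t p) − k(p) = log c(t,p) for all p ∈ P and t ∈ ℝ. -/
open Filter Topology

/-- Gottschalk–Hedlund: for a minimal flow, boundedness of `log c` along one full
orbit implies `log c` is a continuous coboundary. -/
theorem gottschalk_hedlund_cocycle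
    {P : Type*} [MetricSpace P] [CompactSpace P]
    (θ : ℝ → P → P)
    (hθc : Continuous fun q : ℝ × P => θ q.1 q.2)
    (hθ0 : ∀ p : P, θ 0 p = p)
    (hθadd : ∀ (t s : ℝ) (p : P), θ (t + s) p = θ t (θ s p))
    (hmin : ∀ p : P, Dense (Set.range fun t : ℝ => θ t p))
    (c : ℝ → P → ℝ)
    (hcpos : ∀ (t : ℝ) (p : P), 0 < c t p)
    (hccont : Continuous fun q : ℝ × P => c q.1 q.2)
    (hcocycle : ∀ (t s : ℝ) (p : P), c (t + s) p = c t (θ s p) * c s p)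
    (hbdd : ∃ p₀ : P, ∃ M : ℝ, ∀ t : ℝ, |Real.log (c t p₀)| ≤ M) :
    ∃ k : P → ℝ, Continuous k ∧ ∀ (p : P) (t : ℝ), k (θ t p) - k p = Real.log (c t p) := by
  obtain ⟨p₀, M, hM⟩ := hbdd
  set f : ℝ → P → ℝ := fun t p => Real.log (c t p) with hf
  have fcont : Continuous fun q : ℝ × P => f q.1 q.2 :=
    hccont.log (fun q => (hcpos q.1 q.2).ne')
  have fcont1 : ∀ t : ℝ, Continuous fun p => f t p := by
    intro t
    exact fcont.comp (Continuous.prodMk_right t)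
  have fcoc : ∀ (t s : ℝ) (p : P), f (t + s) p = f t (θ s p) + f s p := by
    intro t s p
    simp only [hf, hcocycle t s p]
    exact Real.log_mul (hcpos t (θ s p)).ne' (hcpos s p).ne'
  -- global bound
  have hB : ∀ (t : ℝ) (p : P), |f t p| ≤ 2 * M := by
    intro t
    have horb : ∀ s : ℝ, |f t (θ s p₀)| ≤ 2 * M := by
      intro s
      have : f t (θ s p₀) = f (t + s) p₀ - f s p₀ := by
        rw [fcoc t s p₀]; ring
      rw [this]
      calc |f (t + s) p₀ - f s p₀| ≤ |f (t + s) p₀| + |f s p₀| := abs_sub _ _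
        _ ≤ M + M := add_le_add (hM _) (hM _)
        _ = 2 * M := by ring
    have hC : IsClosed {p : P | |f t p| ≤ 2 * M} :=
      isClosed_le ((fcont1 t).abs) continuous_const
    intro p
    have hsub : Set.range (fun s : ℝ => θ s p₀) ⊆ {p : P | |f t p| ≤ 2 * M} := by
      rintro _ ⟨s, rfl⟩; exact horb s
    have : closure (Set.range (fun s : ℝ => θ s p₀)) ⊆ {p : P | |f t p| ≤ 2 * M} :=
      hC.closure_subset_iff.mpr hsub
    rw [(hmin p₀).closure_eq] at this
    exact this (Set.mem_univ p)
  have hne : ∀ p : P, (Set.range fun t : ℝ => f t p).Nonempty :=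
    fun p => ⟨f 0 p, 0, rfl⟩
  have hbddA : ∀ p : P, BddAbove (Set.range fun t : ℝ => f t p) := by
    rintro p; exact ⟨2 * M, by rintro _ ⟨t, rfl⟩; exact (abs_le.mp (hB t p)).2⟩
  have hbddB : ∀ p : P, BddBelow (Set.range fun t : ℝ => f t p) := by
    rintro p; exact ⟨-(2 * M), by rintro _ ⟨t, rfl⟩; exact (abs_le.mp (hB t p)).1⟩
  set g : P → ℝ := fun p => sSup (Set.range fun t : ℝ => f t p) with hg
  set h : P → ℝ := fun p => sInf (Set.range fun t : ℝ => f t p) with hh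
  -- translation of the range
  have hrange : ∀ (s : ℝ) (p : P),
      (Set.range fun t : ℝ => f t (θ s p))
        = (fun x => x - f s p) '' (Set.range fun t : ℝ => f t p) := by
    intro s p
    ext x
    constructor
    · rintro ⟨t, rfl⟩
      refine ⟨f (t + s) p, ⟨t + s, rfl⟩, ?_⟩
      rw [fcoc t s p]; ring
    · rintro ⟨_, ⟨u, rfl⟩, rfl⟩
      refine ⟨u - s, ?_⟩
      show f (u - s) (θ s p) = f u p - f s p
      have := fcoc (u - s) s p
      rw [sub_add_cancel] at this
      rw [this]; ring
  have hsubmono : ∀ C : ℝ, Monotone fun x : ℝ => x - C :=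
    fun C a b hab => sub_le_sub_right hab C
  have hg_eq : ∀ (s : ℝ) (p : P), g (θ s p) = g p - f s p := by
    intro s p
    rw [hg]
    simp only
    rw [hrange s p]
    exact ((hsubmono (f s p)).map_csSup_of_continuousAt
        ((continuous_sub_right (f s p)).continuousAt) (hne p) (hbddA p)).symm
  have hh_eq : ∀ (s : ℝ) (p : P), h (θ s p) = h p - f s p := by
    intro s p
    rw [hh]
    simp only
    rw [hrange s p]
    exact ((hsubmono (f s p)).map_csInf_of_continuousAt
        ((continuous_sub_right (f s p)).continuousAt) (hne p) (hbddB p)).symm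
  have hle_g : ∀ (t : ℝ) (p : P), f t p ≤ g p :=
    fun t p => le_csSup (hbddA p) ⟨t, rfl⟩
  have hh_le : ∀ (t : ℝ) (p : P), h p ≤ f t p :=
    fun t p => csInf_le (hbddB p) ⟨t, rfl⟩
  -- g - h is constant
  have hconst : ∀ p q : P, g p - h p ≤ g q - h q := by
    intro p q
    by_contra hcon
    push_neg at hcon
    set δ : ℝ := ((g p - h p) - (g q - h q)) / 3 with hδ
    have hδpos : 0 < δ := by rw [hδ]; linarith
    obtain ⟨_, ⟨t₁, rfl⟩, ht₁⟩ :=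
      exists_lt_of_lt_csSup (hne p) (show g p - δ < g p by linarith)
    obtain ⟨_, ⟨t₂, rfl⟩, ht₂⟩ :=
      exists_lt_of_csInf_lt (hne p) (show h p < h p + δ by linarith)
    set U : Set P := {z | g q - h q < f t₁ z - f t₂ z} with hU
    have hUopen : IsOpen U :=
      isOpen_lt continuous_const ((fcont1 t₁).sub (fcont1 t₂))
    have hpU : p ∈ U := by
      simp only [hU, Set.mem_setOf_eq]
      linarith
    obtain ⟨_, ⟨u, rfl⟩, hzU⟩ := (hmin q).exists_mem_open hUopen ⟨p, hpU⟩
    simp only [hU, Set.mem_setOf_eq] at hzU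
    have h1 : f t₁ (θ u q) ≤ g (θ u q) := hle_g _ _
    have h2 : h (θ u q) ≤ f t₂ (θ u q) := hh_le _ _
    have h3 : g (θ u q) - h (θ u q) = g q - h q := by
      rw [hg_eq u q, hh_eq u q]; ring
    linarith
  have hconst' : ∀ p : P, g p - h p = g p₀ - h p₀ :=
    fun p => le_antisymm (hconst p p₀) (hconst p₀ p)
  set C₀ : ℝ := g p₀ - h p₀ with hC₀
  have hgh : ∀ p : P, g p = h p + C₀ := by
    intro p; have := hconst' p; linarith
  -- continuity of g
  have hgcont : Continuous g := by
    rw [continuous_iff_continuousAt]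
    intro x
    rw [ContinuousAt, tendsto_order]
    constructor
    · intro a ha
      obtain ⟨_, ⟨t, rfl⟩, ht⟩ := exists_lt_of_lt_csSup (hne x) ha
      have : ∀ᶠ z in 𝓝 x, a < f t z :=
        continuousAt_const.eventually_lt (fcont1 t).continuousAt ht
      exact this.mono fun z hz => lt_of_lt_of_le hz (hle_g t z)
    · intro b hb
      have hxb : h x < b - C₀ := by have := hgh x; linarith
      obtain ⟨_, ⟨t, rfl⟩, ht⟩ := exists_lt_of_csInf_lt (hne x) hxb
      have : ∀ᶠ z in 𝓝 x, f t z < b - C₀ :=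
        (fcont1 t).continuousAt.eventually_lt continuousAt_const ht
      refine this.mono fun z hz => ?_
      have h1 : h z ≤ f t z := hh_le t z
      have h2 : g z = h z + C₀ := hgh z
      linarith
  refine ⟨fun p => -g p, hgcont.neg, ?_⟩
  intro p t
  have := hg_eq t p
  simp only [hf] at this ⊢
  linarith
end

section
/- Let (P,θ) be a flow on a compact metric space and let π(t,(p,y)) = (θ_t p, c(t,p) y) be the skew-product flow on P × ℝ for a continuous positive cocycle c. Suppose there exists p₀ ∈ P such that {c(t,p₀) : t ∈ ℝ} is bounded, and let K = closure{(θ_t p₀, c(t,p₀)) : t ∈ ℝ}. If P is minimal and there is a residual invariant set P_o ⊆ P such that for every p ∈ P_o there exist sequences t_n → ∞ and s_n → ∞ with c(t_n,p) → 0 and c(s_n,p) → ∞, then: (a) (p,0) ∈ K for every p ∈ P; (b) for every p ∈ P_o the only point of K over p is (p,0); (c) (p₀,1) ∈ K. In particular K is a pinched compact invariant set. -/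
open Filter Topology

/-- The closure of a bounded orbit of the skew-product flow `π(t,(p,y)) = (θ_t p, c(t,p) y)`
over a minimal flow with an oscillating residual set is a pinched compact invariant set:
it contains the whole zero section, sections over oscillation points reduce to `{0}`,
and it contains `(p₀, 1)`. -/
theorem pinched_set_from_bounded_orbit
    {P : Type*} [MetricSpace P] [CompactSpace P]
    (θ : ℝ → P → P)
    (hθc : Continuous fun q : ℝ × P => θ q.1 q.2)
    (hθ0 : ∀ p : P, θ 0 p = p)
    (hθadd : ∀ (t s : ℝ) (p : P), θ (t + s) p = θ t (θ s p))
    (hmin : ∀ p : P, Dense (Set.range fun t : ℝ => θ t p))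
    (c : ℝ → P → ℝ)
    (hcpos : ∀ (t : ℝ) (p : P), 0 < c t p)
    (hccont : Continuous fun q : ℝ × P => c q.1 q.2)
    (hcocycle : ∀ (t s : ℝ) (p : P), c (t + s) p = c t (θ s p) * c s p)
    (p₀ : P) (hbdd : ∃ M : ℝ, ∀ t : ℝ, c t p₀ ≤ M)
    (K : Set (P × ℝ))
    (hK : K = closure {q : P × ℝ | ∃ t : ℝ, q = (θ t p₀, c t p₀)})
    (hKinv : ∀ t : ℝ, (fun q : P × ℝ => (θ t q.1, c t q.1 * q.2)) '' K = K)
    (Po : Set P) (hres : Po ∈ residual P)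
    (hPoinv : ∀ p ∈ Po, ∀ t : ℝ, θ t p ∈ Po)
    (hosc : ∀ p ∈ Po,
      (∃ tseq : ℕ → ℝ, Tendsto tseq atTop atTop ∧
        Tendsto (fun n => c (tseq n) p) atTop (nhds 0)) ∧
      (∃ sseq : ℕ → ℝ, Tendsto sseq atTop atTop ∧
        Tendsto (fun n => c (sseq n) p) atTop atTop)) :
    (∀ p : P, (p, (0:ℝ)) ∈ K) ∧
    (∀ p ∈ Po, ∀ y : ℝ, (p, y) ∈ K → y = 0) ∧
    (p₀, (1:ℝ)) ∈ K := by

  have hc0 : ∀ p : P, c 0 p = 1 := by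
    intro p
    have h := hcocycle 0 0 p
    rw [add_zero, hθ0] at h
    have hp := hcpos 0 p
    nlinarith
  obtain ⟨M, hM⟩ := hbdd
  have hKclosed : IsClosed K := hK ▸ isClosed_closure
  have hbound : ∀ q ∈ K, q.2 ∈ Set.Icc (0:ℝ) M := by
    have hsub : {q : P × ℝ | ∃ t : ℝ, q = (θ t p₀, c t p₀)} ⊆
        Prod.snd ⁻¹' Set.Icc (0:ℝ) M := by
      rintro q ⟨t, rfl⟩
      exact ⟨(hcpos t p₀).le, hM t⟩
    intro q hq
    rw [hK] at hq
    exact closure_minimal hsub (isClosed_Icc.preimage continuous_snd) hq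
  have hinK : ∀ p y, (p, y) ∈ K → ∀ t : ℝ, (θ t p, c t p * y) ∈ K := by
    intro p y h t
    rw [← hKinv t]
    exact ⟨(p, y), h, rfl⟩
  have partB : ∀ p ∈ Po, ∀ y : ℝ, (p, y) ∈ K → y = 0 := by
    intro p hp y hy
    obtain ⟨-, sseq, hs, hcs⟩ := hosc p hp
    by_contra hy0
    rcases lt_or_gt_of_ne hy0 with hneg | hpos
    · have h1 : (0:ℝ) ≤ c (sseq 0) p * y := (hbound _ (hinK p y hy (sseq 0))).1
      have h2 := hcpos (sseq 0) p
      nlinarith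
    · have hub : ∀ n, c (sseq n) p * y ≤ M := fun n =>
        (hbound _ (hinK p y hy (sseq n))).2
      have htop : Tendsto (fun n => c (sseq n) p * y) atTop atTop :=
        hcs.atTop_mul_const hpos
      obtain ⟨n, hn⟩ := (htop.eventually_gt_atTop M).exists
      exact absurd (hub n) (not_le.2 hn)
  have hKcompact : IsCompact K := by
    have hsub : K ⊆ Set.univ ×ˢ Set.Icc (0:ℝ) M := fun q hq => ⟨trivial, hbound q hq⟩
    exact (isCompact_univ.prod isCompact_Icc).of_isClosed_subset hKclosed hsub
  have hproj : ∀ p : P, ∃ y : ℝ, (p, y) ∈ K := by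
    intro p
    have hclosed : IsClosed (Prod.fst '' K) := (hKcompact.image continuous_fst).isClosed
    have horb : (Set.range fun t : ℝ => θ t p₀) ⊆ Prod.fst '' K := by
      rintro _ ⟨t, rfl⟩
      exact ⟨(θ t p₀, c t p₀), hK ▸ subset_closure ⟨t, rfl⟩, rfl⟩
    have hdense : Dense (Prod.fst '' K) := (hmin p₀).mono horb
    have huniv : Prod.fst '' K = Set.univ := by
      rw [← hclosed.closure_eq, hdense.closure_eq]
    have hp : p ∈ Prod.fst '' K := huniv ▸ Set.mem_univ p
    obtain ⟨q, hq, hq1⟩ := hp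
    exact ⟨q.2, by rwa [← hq1, Prod.mk.eta]⟩
  have partA : ∀ p : P, (p, (0:ℝ)) ∈ K := by
    have : Nonempty P := ⟨p₀⟩
    obtain ⟨q0, hq0⟩ : Po.Nonempty := (dense_of_mem_residual hres).nonempty
    obtain ⟨y, hy⟩ := hproj q0
    have hy0 := partB q0 hq0 y hy
    subst hy0
    intro p
    have horb : (Set.range fun t : ℝ => θ t q0) ⊆ {p : P | (p, (0:ℝ)) ∈ K} := by
      rintro _ ⟨t, rfl⟩
      simpa using hinK q0 0 hy t
    have hcl : IsClosed {p : P | (p, (0:ℝ)) ∈ K} :=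
      hKclosed.preimage (continuous_id.prodMk continuous_const)
    have := closure_minimal horb hcl
    exact this ((hmin q0).closure_eq ▸ Set.mem_univ p)
  refine ⟨partA, partB, ?_⟩
  rw [hK]
  apply subset_closure
  exact ⟨0, by rw [hθ0, hc0]⟩
end
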